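/- Let K be a positive trace-one operator on H, T the closed span of B K̄ for B = B(T^⊥) ⊕ N with N a maximal abelian subalgebra of B(T) containing P_T. Then B = B(T^⊥) ⊕ N is maximal among unital C*-subalgebras C of B(H) satisfying Tr(K[A,B]*[A,B]) = 0 for all A, B ∈ C: any such C containing B equals B. -/

import Mathlib

/-!
Beability of `C` forces every commutator `[a, b]` with `a, b ∈ C` to vanish on the support of
`K`, because `Tr(K M*M) = ∑ₙ λₙ ‖M eₙ‖²`. Since `B ⊆ C`, also `[a, b c]` vanishes there, so
`[a, b]` vanishes on `B K̄` and, by continuity, on `T = [B K̄]`. Hence each `a ∈ C` commutes on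
`T` with `P_T` and with every `n ⊕ 0`, `n ∈ N`; the first makes `T` reduce `a` (apply this to
`a*` as well), the second puts the compression of `a` in `N' = N`.
-/

/-- The normal state `T ↦ Tr(KT)` associated to `K = ∑ₙ λₙ |eₙ⟩⟨eₙ|`. -/
noncomputable def trState {H : Type*} [NormedAddCommGroup H] [InnerProductSpace ℂ H]
    (e : ℕ → H) (lam : ℕ → ℝ) (T : H →L[ℂ] H) : ℂ :=
  ∑' n, (lam n : ℂ) * (inner ℂ (e n) (T (e n)) : ℂ)

/-- The algebra `B(T^⊥) ⊕ N`: all bounded operators A on H such that T reduces A and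
the compression of A to T belongs to N. -/
noncomputable def dsAlg {H : Type*} [NormedAddCommGroup H] [InnerProductSpace ℂ H]
    [CompleteSpace H] (T : Submodule ℂ H) [CompleteSpace T]
    (N : Set (↥T →L[ℂ] ↥T)) : Set (H →L[ℂ] H) :=
  {a | (∀ x ∈ T, a x ∈ T) ∧ (∀ x ∈ T, ContinuousLinearMap.adjoint a x ∈ T) ∧
    ((Submodule.orthogonalProjectionOnto T).comp (a.comp T.subtypeL)) ∈ N}

section TraceState

variable {H : Type*} [NormedAddCommGroup H] [InnerProductSpace ℂ H] {e : ℕ → H} {lam : ℕ → ℝ}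

theorem trState_star_mul_self [CompleteSpace H] (e : ℕ → H) (lam : ℕ → ℝ) (M : H →L[ℂ] H) :
    trState e lam (star M * M) = ((∑' n, lam n * ‖M (e n)‖ ^ 2 : ℝ) : ℂ) := by
  rw [trState, Complex.ofReal_tsum]
  refine tsum_congr fun n => ?_
  rw [mul_apply_eq_comp, ContinuousLinearMap.star_eq_adjoint,
    ContinuousLinearMap.adjoint_inner_right, inner_self_eq_norm_sq_to_K]
  push_cast
  rfl

theorem apply_eq_zero_of_trState_star_mul_self_eq_zero [CompleteSpace H] (he : ∀ n, ‖e n‖ = 1)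
    (hlam : ∀ n, 0 ≤ lam n) (hlam_sum : Summable lam) {M : H →L[ℂ] H}
    (hM : trState e lam (star M * M) = 0) {n : ℕ} (hn : lam n ≠ 0) : M (e n) = 0 := by
  have hnonneg : ∀ n, 0 ≤ lam n * ‖M (e n)‖ ^ 2 := fun n => by have := hlam n; positivity
  have hsummable : Summable fun n => lam n * ‖M (e n)‖ ^ 2 := by
    refine .of_nonneg_of_le hnonneg (fun n => ?_) (hlam_sum.mul_right (‖M‖ ^ 2))
    have hle : ‖M (e n)‖ ≤ ‖M‖ := by simpa [he n] using M.le_opNorm (e n)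
    gcongr
    exact hlam n
  have hzero : (fun n => lam n * ‖M (e n)‖ ^ 2) = 0 := by
    rw [trState_star_mul_self, Complex.ofReal_eq_zero] at hM
    exact (hasSum_zero_iff_of_nonneg hnonneg).mp (hM ▸ hsummable.hasSum)
  simpa [hn] using congr_fun hzero n

theorem apply_eq_zero_of_mem_closure_range {K : H →L[ℂ] H}
    (hK : ∀ y : H, K y = ∑' n, lam n • ((inner ℂ (e n) y : ℂ) • e n)) {M : H →L[ℂ] H}
    (hM : ∀ n, lam n ≠ 0 → M (e n) = 0) {x : H} (hx : x ∈ closure (Set.range K)) :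
    M x = 0 := by
  have hMK : Set.range K ⊆ M ⁻¹' {0} := by
    rintro _ ⟨y, rfl⟩
    have hterm : ∀ n, M (lam n • ((inner ℂ (e n) y : ℂ) • e n)) = 0 := fun n => by
      rcases eq_or_ne (lam n) 0 with h | h <;> simp [h, hM]
    -- a non-summable series has sum `0`, which `M` also kills
    by_cases hs : Summable fun n => lam n • ((inner ℂ (e n) y : ℂ) • e n)
    · simp [hK y, M.map_tsum hs, hterm]
    · simp [hK y, tsum_eq_zero_of_not_summable hs]
  exact closure_minimal hMK (isClosed_singleton.preimage M.continuous) hx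

end TraceState

theorem commute_apply_of_mem_topologicalClosure_span {H : Type*} [NormedAddCommGroup H]
    [NormedSpace ℂ H] {C : Subalgebra ℂ (H →L[ℂ] H)} {B : Set (H →L[ℂ] H)}
    (hBC : B ⊆ C) {S : Set H} (hS : ∀ a ∈ C, ∀ b ∈ C, ∀ x ∈ S, a (b x) = b (a x))
    {a b : H →L[ℂ] H} (ha : a ∈ C) (hb : b ∈ C) {y : H}
    (hy : y ∈ (Submodule.span ℂ {y | ∃ c ∈ B, ∃ x ∈ S, c x = y}).topologicalClosure) :
    a (b y) = b (a y) := by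
  have hspan : {y | ∃ c ∈ B, ∃ x ∈ S, c x = y} ⊆
      (LinearMap.ker ((a * b - b * a : H →L[ℂ] H) : H →ₗ[ℂ] H) : Set H) := by
    rintro _ ⟨c, hc, x, hx, rfl⟩
    have hcC : c ∈ C := hBC hc
    have hbc : a (b (c x)) = b (c (a x)) := hS a ha (b * c) (mul_mem hb hcC) x hx
    simp [hbc, hS a ha c hcC x hx]
  have hker := Submodule.topologicalClosure_minimal _ (Submodule.span_le.mpr hspan)
    (a * b - b * a).isClosed_ker hy
  simpa [sub_eq_zero] using hker

section DirectSum

variable {H : Type*} [NormedAddCommGroup H] [InnerProductSpace ℂ H] {T : Submodule ℂ H}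
  [CompleteSpace T]

/-- The operator `n ⊕ 0` on `H = T ⊕ Tᗮ`. -/
noncomputable def extendByZero [CompleteSpace H] (T : Submodule ℂ H) [CompleteSpace T]
    (n : T →L[ℂ] T) : H →L[ℂ] H :=
  T.subtypeL ∘L n ∘L T.orthogonalProjectionOnto

theorem starProjection_mem_dsAlg [CompleteSpace H] (N : StarSubalgebra ℂ (T →L[ℂ] T)) :
    T.starProjection ∈ dsAlg T (N : Set (T →L[ℂ] T)) := by
  refine ⟨fun x _ => T.starProjection_apply_mem x, fun x _ => ?_, ?_⟩
  · rw [← ContinuousLinearMap.star_eq_adjoint, (isSelfAdjoint_starProjection T).star_eq]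
    exact T.starProjection_apply_mem x
  · have hP : T.orthogonalProjectionOnto ∘L T.starProjection ∘L T.subtypeL = 1 := by
      ext u
      simp [Submodule.starProjection, Submodule.orthogonalProjectionOnto_mem_subspace_eq_self]
    exact hP ▸ N.one_mem

theorem extendByZero_mem_dsAlg [CompleteSpace H] {N : Set (T →L[ℂ] T)} {n : T →L[ℂ] T}
    (hn : n ∈ N) : extendByZero T n ∈ dsAlg T N := by
  refine ⟨fun x _ => (n _).2, fun x _ => ?_, ?_⟩
  · rw [extendByZero, ContinuousLinearMap.adjoint_comp, ContinuousLinearMap.adjoint_comp,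
      Submodule.adjoint_subtypeL, Submodule.adjoint_orthogonalProjectionOnto]
    exact (ContinuousLinearMap.adjoint n _).2
  · convert hn
    ext u
    simp [extendByZero, Submodule.orthogonalProjectionOnto_mem_subspace_eq_self]

theorem apply_mem_of_commute_starProjection {a : H →L[ℂ] H}
    (ha : ∀ x ∈ T, a (T.starProjection x) = T.starProjection (a x)) {x : H} (hx : x ∈ T) :
    a x ∈ T := by
  rw [← Submodule.starProjection_eq_self_iff.mpr hx, ha x hx]
  exact T.starProjection_apply_mem _

theorem mem_dsAlg_of_commute_on [CompleteSpace H] {N : StarSubalgebra ℂ (T →L[ℂ] T)}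
    (hNmax : ∀ X : T →L[ℂ] T, (∀ n ∈ N, X * n = n * X) → X ∈ N) {a : H →L[ℂ] H}
    (ha : ∀ b ∈ dsAlg T (N : Set (T →L[ℂ] T)), ∀ x ∈ T, a (b x) = b (a x))
    (ha_adj : ∀ b ∈ dsAlg T (N : Set (T →L[ℂ] T)), ∀ x ∈ T,
      ContinuousLinearMap.adjoint a (b x) = b (ContinuousLinearMap.adjoint a x)) :
    a ∈ dsAlg T (N : Set (T →L[ℂ] T)) := by
  refine ⟨fun x => apply_mem_of_commute_starProjection (ha _ (starProjection_mem_dsAlg N)),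
    fun x => apply_mem_of_commute_starProjection (ha_adj _ (starProjection_mem_dsAlg N)), ?_⟩
  refine hNmax _ fun n hn => ?_
  ext u
  have hu := ha _ (extendByZero_mem_dsAlg hn) u u.2
  simp only [extendByZero, ContinuousLinearMap.comp_apply, Submodule.subtypeL_apply,
    Submodule.orthogonalProjectionOnto_mem_subspace_eq_self] at hu
  simp [hu, Submodule.orthogonalProjectionOnto_mem_subspace_eq_self]

end DirectSum

theorem stmt_11_general {H : Type*} [NormedAddCommGroup H] [InnerProductSpace ℂ H] [CompleteSpace H]
    (K : H →L[ℂ] H) (e : ℕ → H) (he : Orthonormal ℂ e)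
    (lam : ℕ → ℝ) (hlam : ∀ n, 0 ≤ lam n) (hsum : ∑' n, lam n = 1)
    (hK : ∀ y : H, K y = ∑' n, lam n • ((inner ℂ (e n) y : ℂ) • e n))
    (T : Submodule ℂ H) [CompleteSpace T]
    (N : StarSubalgebra ℂ (↥T →L[ℂ] ↥T))
    (hNmax : ∀ X : ↥T →L[ℂ] ↥T, (∀ n ∈ N, X * n = n * X) → X ∈ N)
    (hT : T = (Submodule.span ℂ
      {y | ∃ a ∈ dsAlg T (N : Set (↥T →L[ℂ] ↥T)), ∃ x ∈ closure (Set.range K), a x = y}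
        ).topologicalClosure)
    (C : StarSubalgebra ℂ (H →L[ℂ] H))
    (hBC : dsAlg T (N : Set (↥T →L[ℂ] ↥T)) ⊆ (C : Set (H →L[ℂ] H)))
    (hCbeable : ∀ a ∈ C, ∀ b ∈ C,
        trState e lam (star (a * b - b * a) * (a * b - b * a)) = 0) :
    (C : Set (H →L[ℂ] H)) = dsAlg T (N : Set (↥T →L[ℂ] ↥T)) := by
  have hlam_sum : Summable lam := by
    by_contra h
    simp [tsum_eq_zero_of_not_summable h] at hsum
  have hcomm_K : ∀ a ∈ C, ∀ b ∈ C, ∀ x ∈ closure (Set.range K), a (b x) = b (a x) :=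
    fun a ha b hb x hx => by
      have := apply_eq_zero_of_mem_closure_range hK
        (fun n => apply_eq_zero_of_trState_star_mul_self_eq_zero he.1 hlam hlam_sum
          (hCbeable a ha b hb)) hx
      simpa [sub_eq_zero] using this
  have hcomm_T : ∀ a ∈ C, ∀ b ∈ C, ∀ x ∈ T, a (b x) = b (a x) := fun a ha b hb x hx =>
    commute_apply_of_mem_topologicalClosure_span (C := C.toSubalgebra) hBC hcomm_K ha hb
      (hT ▸ hx)
  refine Set.Subset.antisymm (fun a ha => mem_dsAlg_of_commute_on hNmax ?_ ?_) hBC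
  · exact fun b hb => hcomm_T a ha b (hBC hb)
  · rw [← ContinuousLinearMap.star_eq_adjoint]
    exact fun b hb => hcomm_T _ (star_mem ha) b (hBC hb)

/-- Let K = ∑ₙ λₙ|eₙ⟩⟨eₙ| be a positive trace-one operator, T a closed subspace with
T = [B K̄] for B = B(T^⊥) ⊕ N, where N is a maximal abelian (unital) subalgebra of B(T).
Then B is maximal among unital C*-subalgebras C of B(H) that are beable for K
(Tr(K[A,B]*[A,B]) = 0 for all A, B ∈ C): any such C containing B equals B. -/
theorem stmt_11 {H : Type*} [NormedAddCommGroup H] [InnerProductSpace ℂ H] [CompleteSpace H]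
    (K : H →L[ℂ] H) (e : ℕ → H) (he : Orthonormal ℂ e)
    (lam : ℕ → ℝ) (hlam : ∀ n, 0 ≤ lam n) (hsum : ∑' n, lam n = 1)
    (hK : ∀ y : H, K y = ∑' n, lam n • ((inner ℂ (e n) y : ℂ) • e n))
    (T : Submodule ℂ H) [CompleteSpace T]
    (hTclosed : IsClosed (T : Set H))
    (hKT : closure (Set.range K) ⊆ (T : Set H))
    (N : StarSubalgebra ℂ (↥T →L[ℂ] ↥T))
    (hNab : ∀ a ∈ N, ∀ b ∈ N, a * b = b * a)
    (hNmax : ∀ X : ↥T →L[ℂ] ↥T, (∀ n ∈ N, X * n = n * X) → X ∈ N)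
    (hT : T = (Submodule.span ℂ
      {y | ∃ a ∈ dsAlg T (N : Set (↥T →L[ℂ] ↥T)), ∃ x ∈ closure (Set.range K), a x = y}
        ).topologicalClosure)
    (C : StarSubalgebra ℂ (H →L[ℂ] H))
    (hBC : dsAlg T (N : Set (↥T →L[ℂ] ↥T)) ⊆ (C : Set (H →L[ℂ] H)))
    (hCbeable : ∀ a ∈ C, ∀ b ∈ C,
        trState e lam (star (a * b - b * a) * (a * b - b * a)) = 0) :
    (C : Set (H →L[ℂ] H)) = dsAlg T (N : Set (↥T →L[ℂ] ↥T)) :=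
  stmt_11_general K e he lam hlam hsum hK T N hNmax hT C hBC hCbeable
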